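/- arXiv:1805.05432 — 2 statements merged into one kernel-verified Lean document; each statement's English description precedes it below -/
import Mathlib

section
/- Let G1 ∈ ℝ^{n×n} be symmetric positive definite and G2 ∈ ℝ^{n×n} be symmetric positive semidefinite. Then G1 + G2 is symmetric positive definite, and for every i = 1, 2, …, n, λ_i(chol(G1 + G2)) ≥ λ_i(chol(G1)). -/
/-! Writing `G₁ = R₁ᵀ R₁` and `G₁ + G₂ = R₃ᵀ R₃`, we get `‖R₃ z‖² - ‖R₁ z‖² = zᵀ G₂ z ≥ 0`, so
each lattice vector `R₁ z` is no longer than `R₃ z`. Both factors are invertible, so `z ↦ R₁ z`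
and `z ↦ R₃ z` preserve linear independence of integer vectors: any `i` independent vectors of
`L(R₃)` in a ball give `i` independent vectors of `L(R₁)` in the same ball. -/

open Matrix

noncomputable section

/-- Euclidean norm of a real vector. -/
def euclNorm {m : ℕ} (x : Fin m → ℝ) : ℝ := Real.sqrt (∑ k, x k ^ 2)

/-- The lattice vector `A z` for an integer vector `z`. -/
def latticeVec {m n : ℕ} (A : Matrix (Fin m) (Fin n) ℝ) (z : Fin n → ℤ) : Fin m → ℝ :=
  A.mulVec fun k => (z k : ℝ)

/-- The `i`-th successive minimum of the lattice generated by `A`: the smallest `r ≥ 0` such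
that the closed ball of radius `r` centered at the origin contains `i` linearly independent
lattice vectors. -/
def succMin {m n : ℕ} (A : Matrix (Fin m) (Fin n) ℝ) (i : ℕ) : ℝ :=
  sInf {r : ℝ | 0 ≤ r ∧ ∃ v : Fin i → (Fin n → ℤ),
    LinearIndependent ℝ (fun j => latticeVec A (v j)) ∧
    ∀ j, euclNorm (latticeVec A (v j)) ≤ r}

/-- `R` is the Cholesky factor of `G`: `R` is upper triangular with positive diagonal
entries and `Rᵀ * R = G`. -/
def IsCholesky {n : ℕ} (G R : Matrix (Fin n) (Fin n) ℝ) : Prop :=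
  R.BlockTriangular id ∧ (∀ j, 0 < R j j) ∧ Rᵀ * R = G

theorem IsCholesky.injective_mulVec {n : ℕ} {G R : Matrix (Fin n) (Fin n) ℝ}
    (h : IsCholesky G R) : Function.Injective R.mulVec := by
  refine Matrix.mulVec_injective_iff_isUnit.2 ?_
  rw [Matrix.isUnit_iff_isUnit_det, Matrix.det_of_isUpperTriangular h.1]
  exact (Finset.prod_pos fun j _ => h.2.1 j).ne'.isUnit

theorem euclNorm_mulVec_sq {m n : ℕ} (A : Matrix (Fin m) (Fin n) ℝ) (x : Fin n → ℝ) :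
    euclNorm (A *ᵥ x) ^ 2 = x ⬝ᵥ ((Aᵀ * A) *ᵥ x) := by
  rw [euclNorm, Real.sq_sqrt (Finset.sum_nonneg fun k _ => sq_nonneg _), ← Matrix.mulVec_mulVec,
    Matrix.dotProduct_mulVec, Matrix.vecMul_transpose]
  simp only [dotProduct, sq]

theorem euclNorm_mulVec_le_of_posSemidef_sub {m p n : ℕ} {A : Matrix (Fin m) (Fin n) ℝ}
    {B : Matrix (Fin p) (Fin n) ℝ} (h : (Bᵀ * B - Aᵀ * A).PosSemidef) (x : Fin n → ℝ) :
    euclNorm (A *ᵥ x) ≤ euclNorm (B *ᵥ x) := by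
  have hx := h.dotProduct_mulVec_nonneg x
  rw [star_trivial, Matrix.sub_mulVec, dotProduct_sub, sub_nonneg,
    ← euclNorm_mulVec_sq, ← euclNorm_mulVec_sq] at hx
  exact (pow_le_pow_iff_left₀ (Real.sqrt_nonneg _) (Real.sqrt_nonneg _) two_ne_zero).1 hx

theorem linearIndependent_latticeVec_iff {m n i : ℕ} {A : Matrix (Fin m) (Fin n) ℝ}
    (hA : Function.Injective A.mulVec) (v : Fin i → Fin n → ℤ) :
    LinearIndependent ℝ (fun j => latticeVec A (v j)) ↔
      LinearIndependent ℝ (fun j k => (v j k : ℝ)) :=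
  A.mulVecLin.linearIndependent_iff (LinearMap.ker_eq_bot.2 hA)

theorem exists_linearIndependent_latticeVec {m n i : ℕ} {A : Matrix (Fin m) (Fin n) ℝ}
    (hA : Function.Injective A.mulVec) (hi : i ≤ n) :
    ∃ v : Fin i → Fin n → ℤ, LinearIndependent ℝ (fun j => latticeVec A (v j)) := by
  refine ⟨fun j => Pi.single (Fin.castLE hi j) 1, (linearIndependent_latticeVec_iff hA _).2 ?_⟩
  convert (Pi.basisFun ℝ (Fin n)).linearIndependent.comp _ (Fin.castLE_injective hi) with j k
  simp [Pi.single_apply]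

theorem succMin_le_succMin {m p n i : ℕ} {A : Matrix (Fin m) (Fin n) ℝ}
    {B : Matrix (Fin p) (Fin n) ℝ} (hA : Function.Injective A.mulVec)
    (hB : Function.Injective B.mulVec) (hi : i ≤ n)
    (hAB : ∀ z, euclNorm (latticeVec A z) ≤ euclNorm (latticeVec B z)) :
    succMin A i ≤ succMin B i := by
  refine csInf_le_csInf ⟨0, fun r hr => hr.1⟩ ?_ ?_
  · obtain ⟨v, hv⟩ := exists_linearIndependent_latticeVec hB hi
    have hnonneg : ∀ j, 0 ≤ euclNorm (latticeVec B (v j)) := fun j => Real.sqrt_nonneg _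
    exact ⟨∑ j, euclNorm (latticeVec B (v j)), Finset.sum_nonneg fun j _ => hnonneg j, v, hv,
      fun j => Finset.single_le_sum (fun j _ => hnonneg j) (Finset.mem_univ j)⟩
  · rintro r ⟨hr, v, hv, hvr⟩
    refine ⟨hr, v, ?_, fun j => (hAB (v j)).trans (hvr j)⟩
    exact (linearIndependent_latticeVec_iff hA v).2 ((linearIndependent_latticeVec_iff hB v).1 hv)

theorem statement1 {n : ℕ} (G1 G2 : Matrix (Fin n) (Fin n) ℝ)
    (hG1 : G1.PosDef) (hG2 : G2.PosSemidef) :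
    (G1 + G2).PosDef ∧
      ∀ R1 R3 : Matrix (Fin n) (Fin n) ℝ,
        IsCholesky G1 R1 → IsCholesky (G1 + G2) R3 →
        ∀ i : ℕ, 1 ≤ i → i ≤ n → succMin R1 i ≤ succMin R3 i := by
  refine ⟨hG1.add_posSemidef hG2, fun R1 R3 h1 h3 i _ hi => ?_⟩
  have hgram : (R3ᵀ * R3 - R1ᵀ * R1).PosSemidef := by
    rwa [h1.2.2, h3.2.2, add_sub_cancel_left]
  exact succMin_le_succMin h1.injective_mulVec h3.injective_mulVec hi
    fun z => euclNorm_mulVec_le_of_posSemidef_sub hgram _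
end
end

section
/- Let G1, G2 ∈ ℝ^{n×n} be symmetric positive definite matrices such that G1 − G2 is also symmetric positive definite. Then for every i = 1, 2, …, n: λ_i(chol(G1)) > λ_i(chol(G2)) and λ_i(chol(G1⁻¹)) < λ_i(chol(G2⁻¹)). -/
open Matrix

noncomputable section

/-! Both inequalities come from one comparison. If `G₁ - G₂` is positive definite then, by
compactness of the unit sphere, `c · xᵀG₂x ≤ xᵀG₁x` for some `c > 1`, and `‖R z‖² = zᵀGz` for a
Cholesky factor `R` of `G`; hence every radius admissible for `λ_i(R₁)` becomes admissible for
`λ_i(R₂)` after division by `√c`, so `√c · λ_i(R₂) ≤ λ_i(R₁)`. As `λ_i(R₂)` is positive (nonzero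
integer vectors have sup norm at least one), the inequality is strict. The inverse Gram matrices
are handled by the same comparison, since `G₂⁻¹ - G₁⁻¹` is again positive definite. -/

open Function

theorem exists_le_mul_of_homogeneous {E : Type*} [NormedAddCommGroup E] [NormedSpace ℝ E]
    [FiniteDimensional ℝ E] {f g : E → ℝ} (hf : Continuous f) (hg : Continuous g)
    (hf_smul : ∀ (t : ℝ) x, f (t • x) = t ^ 2 * f x)
    (hg_smul : ∀ (t : ℝ) x, g (t • x) = t ^ 2 * g x) (hg_pos : ∀ x, x ≠ 0 → 0 < g x) :
    ∃ C, 0 < C ∧ ∀ x, f x ≤ C * g x := by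
  have hg_ne : ∀ x ∈ Metric.sphere (0 : E) 1, g x ≠ 0 := fun x hx =>
    (hg_pos x (ne_zero_of_mem_sphere one_ne_zero ⟨x, hx⟩)).ne'
  obtain ⟨C₀, hC₀⟩ := (isCompact_sphere (0 : E) 1).bddAbove_image
    (hf.continuousOn.div hg.continuousOn hg_ne)
  refine ⟨max C₀ 1, by positivity, fun x => ?_⟩
  rcases eq_or_ne x 0 with rfl | hx
  · have hf0 : f 0 = 0 := by simpa using hf_smul 0 0
    have hg0 : g 0 = 0 := by simpa using hg_smul 0 0
    simp [hf0, hg0]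
  set u := ‖x‖⁻¹ • x
  have hu : u ∈ Metric.sphere (0 : E) 1 := by simp [u, norm_smul, hx]
  have hgu : 0 < g u := hg_pos u (ne_zero_of_mem_sphere one_ne_zero ⟨u, hu⟩)
  have hfu : f u ≤ max C₀ 1 * g u := by
    have := hC₀ ⟨u, hu, rfl⟩
    rw [Pi.div_apply, div_le_iff₀ hgu] at this
    nlinarith [le_max_left C₀ 1]
  have hxu : x = ‖x‖ • u := by simp [u, smul_smul, hx]
  rw [hxu, hf_smul, hg_smul, mul_left_comm]
  exact mul_le_mul_of_nonneg_left hfu (sq_nonneg _)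

namespace Matrix

variable {n : ℕ}

theorem dotProduct_mulVec_smul_self (A : Matrix (Fin n) (Fin n) ℝ) (t : ℝ) (x : Fin n → ℝ) :
    (t • x) ⬝ᵥ (A *ᵥ (t • x)) = t ^ 2 * (x ⬝ᵥ (A *ᵥ x)) := by
  simp only [mulVec_smul, dotProduct_smul, smul_dotProduct, smul_eq_mul]
  ring

theorem continuous_dotProduct_mulVec_self (A : Matrix (Fin n) (Fin n) ℝ) :
    Continuous fun x : Fin n → ℝ => x ⬝ᵥ (A *ᵥ x) := by
  fun_prop

theorem PosDef.dotProduct_mulVec_self_pos {G : Matrix (Fin n) (Fin n) ℝ} (hG : G.PosDef)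
    {x : Fin n → ℝ} (hx : x ≠ 0) : 0 < x ⬝ᵥ (G *ᵥ x) := by
  simpa using hG.dotProduct_mulVec_pos hx

theorem PosDef.exists_one_lt_mul_le {G₁ G₂ : Matrix (Fin n) (Fin n) ℝ} (h : (G₁ - G₂).PosDef) :
    ∃ c, 1 < c ∧ ∀ x : Fin n → ℝ, c * (x ⬝ᵥ (G₂ *ᵥ x)) ≤ x ⬝ᵥ (G₁ *ᵥ x) := by
  obtain ⟨C, hC, hle⟩ := exists_le_mul_of_homogeneous (continuous_dotProduct_mulVec_self G₂)
    (continuous_dotProduct_mulVec_self (G₁ - G₂)) (dotProduct_mulVec_smul_self G₂)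
    (dotProduct_mulVec_smul_self _) fun x hx => h.dotProduct_mulVec_self_pos hx
  refine ⟨1 + C⁻¹, by simpa using hC, fun x => ?_⟩
  have hx := hle x
  simp only [sub_mulVec, dotProduct_sub] at hx
  rw [add_mul, one_mul, ← le_sub_iff_add_le', inv_mul_le_iff₀ hC]
  exact hx

theorem PosDef.exists_pos_le_intCast {G : Matrix (Fin n) (Fin n) ℝ} (hG : G.PosDef) :
    ∃ δ, 0 < δ ∧ ∀ z : Fin n → ℤ, z ≠ 0 →
      δ ≤ (fun k => (z k : ℝ)) ⬝ᵥ (G *ᵥ fun k => (z k : ℝ)) := by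
  obtain ⟨C, hC, hle⟩ := exists_le_mul_of_homogeneous (f := fun x => ‖x‖ ^ 2)
    (continuous_norm.pow 2) (continuous_dotProduct_mulVec_self G)
    (fun t x => by simp only [norm_smul, mul_pow, Real.norm_eq_abs, sq_abs])
    (dotProduct_mulVec_smul_self G) fun x hx => hG.dotProduct_mulVec_self_pos hx
  refine ⟨C⁻¹, inv_pos.2 hC, fun z hz => ?_⟩
  obtain ⟨k, hk⟩ := ne_iff.1 hz
  have h1 : (1 : ℝ) ≤ ‖fun k => (z k : ℝ)‖ := by
    calc (1 : ℝ) ≤ |(z k : ℝ)| := by exact_mod_cast Int.one_le_abs hk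
      _ ≤ ‖fun k => (z k : ℝ)‖ := norm_le_pi_norm (fun k => (z k : ℝ)) k
  rw [inv_le_iff_one_le_mul₀' hC]
  nlinarith [hle fun k => (z k : ℝ)]

theorem PosDef.inv_sub_inv {G₁ G₂ : Matrix (Fin n) (Fin n) ℝ} (hG₁ : G₁.PosDef)
    (hG₂ : G₂.PosDef) (h : (G₁ - G₂).PosDef) : (G₂⁻¹ - G₁⁻¹).PosDef := by
  refine .of_dotProduct_mulVec_pos (hG₂.inv.isHermitian.sub hG₁.inv.isHermitian) fun x hx => ?_
  set y := G₁⁻¹ *ᵥ x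
  set w := G₂⁻¹ *ᵥ x
  have hy : G₁ *ᵥ y = x := by
    simp [y, mulVec_mulVec, mul_nonsing_inv _ hG₁.det_pos.ne'.isUnit]
  have hw : G₂ *ᵥ w = x := by
    simp [w, mulVec_mulVec, mul_nonsing_inv _ hG₂.det_pos.ne'.isUnit]
  have hy0 : y ≠ 0 := by rintro hy0; simp [hy0] at hy; exact hx hy.symm
  have hsymm : w ⬝ᵥ (G₂ *ᵥ y) = x ⬝ᵥ y := by
    rw [dotProduct_mulVec, ← mulVec_transpose, ← conjTranspose_eq_transpose_of_trivial,
      hG₂.isHermitian.eq, hw]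
  -- `xᵀG₂⁻¹x - xᵀG₁⁻¹x = (y - w)ᵀG₂(y - w) + yᵀ(G₁ - G₂)y` with `y = G₁⁻¹x`, `w = G₂⁻¹x`
  have hsq := hG₂.posSemidef.dotProduct_mulVec_nonneg (y - w)
  have hdiff := h.dotProduct_mulVec_self_pos hy0
  simp only [star_trivial, sub_mulVec, mulVec_sub, dotProduct_sub, sub_dotProduct, hy, hw,
    hsymm] at hsq hdiff ⊢
  linarith [dotProduct_comm x y, dotProduct_comm x w]

end Matrix

namespace IsCholesky

variable {n : ℕ} {G R : Matrix (Fin n) (Fin n) ℝ}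

theorem mulVec_injective (hR : IsCholesky G R) : Injective R.mulVec := by
  refine Matrix.mulVec_injective_of_isUnit ((Matrix.isUnit_iff_isUnit_det R).2 ?_)
  rw [Matrix.det_of_isUpperTriangular hR.1]
  exact (Finset.prod_pos fun j _ => hR.2.1 j).ne'.isUnit

theorem euclNorm_latticeVec (hR : IsCholesky G R) (z : Fin n → ℤ) :
    euclNorm (latticeVec R z) = √((fun k => (z k : ℝ)) ⬝ᵥ (G *ᵥ fun k => (z k : ℝ))) := by
  rw [← hR.2.2, ← Matrix.mulVec_mulVec, Matrix.dotProduct_mulVec, Matrix.vecMul_transpose]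
  simp [euclNorm, latticeVec, dotProduct, sq]

end IsCholesky

section SuccessiveMinima

variable {m n i : ℕ}

theorem euclNorm_nonneg (x : Fin m → ℝ) : 0 ≤ euclNorm x := Real.sqrt_nonneg _

def succMinRadii (A : Matrix (Fin m) (Fin n) ℝ) (i : ℕ) : Set ℝ :=
  {r : ℝ | 0 ≤ r ∧ ∃ v : Fin i → (Fin n → ℤ),
    LinearIndependent ℝ (fun j => latticeVec A (v j)) ∧
    ∀ j, euclNorm (latticeVec A (v j)) ≤ r}

theorem succMin_eq_sInf (A : Matrix (Fin m) (Fin n) ℝ) (i : ℕ) :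
    succMin A i = sInf (succMinRadii A i) := rfl

theorem bddBelow_succMinRadii (A : Matrix (Fin m) (Fin n) ℝ) (i : ℕ) :
    BddBelow (succMinRadii A i) :=
  ⟨0, fun _ hr => hr.1⟩

theorem linearIndependent_latticeVec_of_injective {p : ℕ} {A : Matrix (Fin p) (Fin n) ℝ}
    {B : Matrix (Fin m) (Fin n) ℝ} (hB : Injective B.mulVec) {v : Fin i → Fin n → ℤ}
    (hv : LinearIndependent ℝ fun j => latticeVec A (v j)) :
    LinearIndependent ℝ fun j => latticeVec B (v j) :=
  (hv.of_comp A.mulVecLin).map' B.mulVecLin (LinearMap.ker_eq_bot.2 hB)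

theorem succMinRadii_nonempty {A : Matrix (Fin m) (Fin n) ℝ} (hA : Injective A.mulVec)
    (hi : i ≤ n) : (succMinRadii A i).Nonempty := by
  let v : Fin i → Fin n → ℤ := fun j => Pi.single (Fin.castLE hi j) 1
  have hv : LinearIndependent ℝ fun j => latticeVec (1 : Matrix (Fin n) (Fin n) ℝ) (v j) := by
    convert (Pi.basisFun ℝ (Fin n)).linearIndependent.comp _ (Fin.castLE_injective hi) with j
    ext k
    rcases eq_or_ne k (Fin.castLE hi j) with rfl | hk <;> simp [v, latticeVec, *]
  exact ⟨∑ j, euclNorm (latticeVec A (v j)), Finset.sum_nonneg fun j _ => euclNorm_nonneg _, v,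
    linearIndependent_latticeVec_of_injective hA hv,
    fun j => Finset.single_le_sum (f := fun j => euclNorm (latticeVec A (v j)))
      (fun j _ => euclNorm_nonneg _) (Finset.mem_univ j)⟩

theorem le_succMin {A : Matrix (Fin m) (Fin n) ℝ} {r : ℝ} (hne : (succMinRadii A i).Nonempty)
    (hi : 1 ≤ i) (h : ∀ z : Fin n → ℤ, z ≠ 0 → r ≤ euclNorm (latticeVec A z)) :
    r ≤ succMin A i := by
  rw [succMin_eq_sInf]
  refine le_csInf hne fun s ⟨_, v, hv, hvs⟩ => ?_
  have hv0 : v ⟨0, hi⟩ ≠ 0 := fun h0 => hv.ne_zero ⟨0, hi⟩ <| by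
    simp only [latticeVec, h0, Pi.zero_apply, Int.cast_zero]
    exact A.mulVec_zero
  exact (h _ hv0).trans (hvs _)

theorem mul_succMin_le {A B : Matrix (Fin m) (Fin n) ℝ} {c : ℝ} (hc : 0 < c)
    (hB : Injective B.mulVec) (hne : (succMinRadii A i).Nonempty)
    (h : ∀ z, c * euclNorm (latticeVec B z) ≤ euclNorm (latticeVec A z)) :
    c * succMin B i ≤ succMin A i := by
  rw [succMin_eq_sInf, succMin_eq_sInf]
  refine le_csInf hne fun r ⟨hr, v, hv, hvr⟩ => ?_
  have hmem : r / c ∈ succMinRadii B i :=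
    ⟨by positivity, v, linearIndependent_latticeVec_of_injective hB hv,
      fun j => (le_div_iff₀' hc).2 ((h (v j)).trans (hvr j))⟩
  exact (le_div_iff₀' hc).1 (csInf_le (bddBelow_succMinRadii B i) hmem)

end SuccessiveMinima

theorem succMin_lt_succMin_of_posDef_sub {n i : ℕ} {G₁ G₂ R₁ R₂ : Matrix (Fin n) (Fin n) ℝ}
    (hG₂ : G₂.PosDef) (h : (G₁ - G₂).PosDef) (hR₁ : IsCholesky G₁ R₁) (hR₂ : IsCholesky G₂ R₂)
    (hi : 1 ≤ i) (hin : i ≤ n) : succMin R₂ i < succMin R₁ i := by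
  obtain ⟨c, hc, hcle⟩ := h.exists_one_lt_mul_le
  obtain ⟨δ, hδ, hδle⟩ := hG₂.exists_pos_le_intCast
  have hpos : 0 < succMin R₂ i :=
    (Real.sqrt_pos.2 hδ).trans_le <| le_succMin (succMinRadii_nonempty hR₂.mulVec_injective hin)
      hi fun z hz => by rw [hR₂.euclNorm_latticeVec]; exact Real.sqrt_le_sqrt (hδle z hz)
  have hle : √c * succMin R₂ i ≤ succMin R₁ i :=
    mul_succMin_le (by positivity) hR₂.mulVec_injective
      (succMinRadii_nonempty hR₁.mulVec_injective hin) fun z => by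
        rw [hR₁.euclNorm_latticeVec, hR₂.euclNorm_latticeVec, ← Real.sqrt_mul (by linarith)]
        exact Real.sqrt_le_sqrt (hcle _)
  have hc' : 1 < √c := by simpa using Real.sqrt_lt_sqrt zero_le_one hc
  exact (lt_mul_left hpos hc').trans_le hle

theorem statement5 {n : ℕ} (G1 G2 : Matrix (Fin n) (Fin n) ℝ)
    (hG1 : G1.PosDef) (hG2 : G2.PosDef) (hdiff : (G1 - G2).PosDef)
    (R1 R2 Rh1 Rh2 : Matrix (Fin n) (Fin n) ℝ)
    (hR1 : IsCholesky G1 R1) (hR2 : IsCholesky G2 R2)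
    (hRh1 : IsCholesky G1⁻¹ Rh1) (hRh2 : IsCholesky G2⁻¹ Rh2) :
    ∀ i : ℕ, 1 ≤ i → i ≤ n →
      succMin R2 i < succMin R1 i ∧ succMin Rh1 i < succMin Rh2 i := fun _ hi hin =>
  ⟨succMin_lt_succMin_of_posDef_sub hG2 hdiff hR1 hR2 hi hin,
    succMin_lt_succMin_of_posDef_sub hG1.inv (hG1.inv_sub_inv hG2 hdiff) hRh2 hRh1 hi hin⟩
end
end
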